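/- arXiv:2305.08174 — 3 statements merged into one kernel-verified Lean document; each statement's English description precedes it below -/
import Mathlib

section
/- Let Γ be a nonempty closed subset of EuclideanSpace ℝ (Fin n), let d(x) = infDist(x, Γ), and let x ∉ Γ be a point at which d is differentiable. Then the closest point of Γ to x is unique: if y₁, y₂ ∈ Γ satisfy dist(x, y₁) = infDist(x, Γ) and dist(x, y₂) = infDist(x, Γ), then y₁ = y₂. -/
/-! At a point `x`, the distance function `d = infDist · Γ` decreases with unit speed along the
segment from `x` to any closest point `y`, so its derivative `L` satisfies `L (x - y) = ‖x - y‖`,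
while `‖L‖ ≤ 1` because `d` is `1`-Lipschitz. Two closest points `y₁, y₂` then give
`‖u₁‖ + ‖u₂‖ = L (u₁ + u₂) ≤ ‖u₁ + u₂‖` for `uᵢ = x - yᵢ`, so by strict convexity of the
Euclidean norm `u₁` and `u₂` lie on the same ray; having equal norms, they coincide. -/

open Set Metric AffineMap

section NormedSpace

variable {E : Type*} [NormedAddCommGroup E] [NormedSpace ℝ E]

theorem Metric.infDist_lineMap_of_dist_eq_infDist {s : Set E} {x y : E} (hy : y ∈ s)
    (hxy : dist x y = infDist x s) {t : ℝ} (ht : t ∈ Icc (0 : ℝ) 1) :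
    infDist (lineMap x y t) s = (1 - t) * infDist x s := by
  apply le_antisymm
  · calc infDist (lineMap x y t) s ≤ dist (lineMap x y t) y := infDist_le_dist_of_mem hy
      _ = (1 - t) * infDist x s := by
        rw [dist_lineMap_right, Real.norm_of_nonneg (sub_nonneg.2 ht.2), hxy]
  · have h := infDist_le_infDist_add_dist (x := x) (y := lineMap x y t) (s := s)
    rw [dist_comm, dist_lineMap_left, Real.norm_of_nonneg ht.1, hxy] at h
    linarith

theorem Metric.fderiv_infDist_apply_sub_of_dist_eq_infDist {s : Set E} {x y : E}
    (hd : DifferentiableAt ℝ (fun z => infDist z s) x) (hy : y ∈ s)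
    (hxy : dist x y = infDist x s) :
    fderiv ℝ (fun z => infDist z s) x (x - y) = infDist x s := by
  have hchain : HasDerivWithinAt (fun t : ℝ => infDist (lineMap x y t) s)
      (fderiv ℝ (fun z => infDist z s) x (y - x)) (Ici 0) 0 := by
    exact (hd.hasFDerivAt.comp_hasDerivAt_of_eq (0 : ℝ) hasDerivAt_lineMap
      (lineMap_apply_zero x y).symm).hasDerivWithinAt
  have hlinear : HasDerivWithinAt (fun t : ℝ => infDist (lineMap x y t) s)
      (-infDist x s) (Ici 0) 0 := by
    have h := (((hasDerivAt_id (0 : ℝ)).const_sub 1).mul_const (infDist x s)).hasDerivWithinAt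
      (s := Ici 0)
    rw [neg_one_mul] at h
    refine h.congr_of_eventuallyEq ?_ ?_
    · filter_upwards [Icc_mem_nhdsGE (zero_lt_one' ℝ)] with t ht
      exact infDist_lineMap_of_dist_eq_infDist hy hxy ht
    · exact infDist_lineMap_of_dist_eq_infDist hy hxy ⟨le_rfl, zero_le_one⟩
  rw [← neg_sub, map_neg, (uniqueDiffWithinAt_Ici 0).eq_deriv _ hchain hlinear, neg_neg]

variable [StrictConvexSpace ℝ E]

theorem sameRay_of_apply_eq_norm {L : E →L[ℝ] ℝ} (hL : ‖L‖ ≤ 1) {u w : E}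
    (hu : L u = ‖u‖) (hw : L w = ‖w‖) : SameRay ℝ u w := by
  refine sameRay_iff_norm_add.2 (le_antisymm (norm_add_le u w) ?_)
  calc ‖u‖ + ‖w‖ = L (u + w) := by rw [map_add, hu, hw]
    _ ≤ ‖L (u + w)‖ := le_abs_self _
    _ ≤ ‖L‖ * ‖u + w‖ := L.le_opNorm _
    _ ≤ ‖u + w‖ := mul_le_of_le_one_left (norm_nonneg _) hL

theorem Metric.eq_of_dist_eq_infDist_of_differentiableAt {s : Set E} {x y₁ y₂ : E}
    (hd : DifferentiableAt ℝ (fun z => infDist z s) x) (hy₁ : y₁ ∈ s) (hy₂ : y₂ ∈ s)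
    (h₁ : dist x y₁ = infDist x s) (h₂ : dist x y₂ = infDist x s) : y₁ = y₂ := by
  have hL : ‖fderiv ℝ (fun z => infDist z s) x‖ ≤ 1 := by
    simpa using norm_fderiv_le_of_lipschitz ℝ (lipschitz_infDist_pt s) (x₀ := x)
  have hray : SameRay ℝ (x - y₁) (x - y₂) := sameRay_of_apply_eq_norm hL
    (by rw [fderiv_infDist_apply_sub_of_dist_eq_infDist hd hy₁ h₁, ← h₁, dist_eq_norm])
    (by rw [fderiv_infDist_apply_sub_of_dist_eq_infDist hd hy₂ h₂, ← h₂, dist_eq_norm])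
  exact sub_right_injective (hray.eq_of_norm_eq (by rw [← dist_eq_norm, ← dist_eq_norm, h₁, h₂]))

end NormedSpace

theorem closest_point_unique_of_differentiable_general
    {n : ℕ} (Γ : Set (EuclideanSpace ℝ (Fin n)))
    (x : EuclideanSpace ℝ (Fin n))
    (hd : DifferentiableAt ℝ (fun z => Metric.infDist z Γ) x)
    (y₁ y₂ : EuclideanSpace ℝ (Fin n)) (hy₁ : y₁ ∈ Γ) (hy₂ : y₂ ∈ Γ)
    (h₁ : dist x y₁ = Metric.infDist x Γ) (h₂ : dist x y₂ = Metric.infDist x Γ) :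
    y₁ = y₂ :=
  eq_of_dist_eq_infDist_of_differentiableAt hd hy₁ hy₂ h₁ h₂

/-- If the distance function to a nonempty closed set `Γ` is differentiable at `x ∉ Γ`,
then the closest point of `Γ` to `x` is unique. -/
theorem closest_point_unique_of_differentiable
    {n : ℕ} (Γ : Set (EuclideanSpace ℝ (Fin n))) (hne : Γ.Nonempty) (hcl : IsClosed Γ)
    (x : EuclideanSpace ℝ (Fin n)) (hx : x ∉ Γ)
    (hd : DifferentiableAt ℝ (fun z => Metric.infDist z Γ) x)
    (y₁ y₂ : EuclideanSpace ℝ (Fin n)) (hy₁ : y₁ ∈ Γ) (hy₂ : y₂ ∈ Γ)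
    (h₁ : dist x y₁ = Metric.infDist x Γ) (h₂ : dist x y₂ = Metric.infDist x Γ) :
    y₁ = y₂ :=
  closest_point_unique_of_differentiable_general Γ x hd y₁ y₂ hy₁ hy₂ h₁ h₂
end

section
/- Let A ⊆ EuclideanSpace ℝ (Fin n) be an open bounded set whose frontier Γ = frontier A is nonempty, and define the signed distance function u by u(x) = infDist(x, Γ) if x ∉ A and u(x) = −infDist(x, Γ) if x ∈ A. If x ∉ Γ and u is differentiable at x, then the gradient of u at x has norm one: ‖∇u(x)‖ = 1. -/
/-! Since `x` lies in the interior or in the exterior of `A`, near `x` the function `u` agrees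
with `infDist · Γ` or with its negative. The distance function is 1-Lipschitz, so its derivative
has norm at most one; along the segment from `x` to a nearest point of the closed set `Γ` it
decreases at unit rate, so the derivative has norm at least one. -/

open Metric AffineMap Filter Topology InnerProductSpace

section InfDist

variable {E : Type*} [NormedAddCommGroup E] [NormedSpace ℝ E] {s : Set E} {x y : E}

theorem Metric.infDist_lineMap_of_infDist_eq_dist (hy : y ∈ s) (hxy : infDist x s = dist x y)
    {t : ℝ} (ht : t ∈ Set.Icc (0 : ℝ) 1) :
    infDist (lineMap x y t) s = (1 - t) * infDist x s := by
  obtain ⟨ht₀, ht₁⟩ := ht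
  apply le_antisymm
  · calc infDist (lineMap x y t) s ≤ dist (lineMap x y t) y := infDist_le_dist_of_mem hy
      _ = (1 - t) * infDist x s := by
        rw [dist_lineMap_right, hxy, Real.norm_of_nonneg (by linarith)]
  · have htri := infDist_le_infDist_add_dist (s := s) (x := x) (y := lineMap x y t)
    rw [dist_comm, dist_lineMap_left, Real.norm_of_nonneg ht₀, ← hxy] at htri
    linarith

theorem Metric.fderiv_infDist_apply_sub_of_infDist_eq_dist
    (hd : DifferentiableAt ℝ (infDist · s) x) (hy : y ∈ s) (hxy : infDist x s = dist x y) :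
    fderiv ℝ (infDist · s) x (y - x) = -infDist x s := by
  have hchain : HasDerivWithinAt (fun t : ℝ => infDist (lineMap x y t) s)
      (fderiv ℝ (infDist · s) x (y - x)) (Set.Icc 0 1) 0 := by
    have hfx : HasFDerivAt (infDist · s) (fderiv ℝ (infDist · s) x) (lineMap x y (0 : ℝ)) := by
      simpa using hd.hasFDerivAt
    exact (hfx.comp_hasDerivAt 0 hasDerivAt_lineMap).hasDerivWithinAt
  have haffine : HasDerivWithinAt (fun t : ℝ => infDist (lineMap x y t) s)
      (-infDist x s) (Set.Icc 0 1) 0 := by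
    have hlin : HasDerivAt (fun t : ℝ => (1 - t) * infDist x s) (-infDist x s) 0 := by
      simpa using ((hasDerivAt_id (0 : ℝ)).const_sub 1).mul_const (infDist x s)
    exact hlin.hasDerivWithinAt.congr (fun t ht => infDist_lineMap_of_infDist_eq_dist hy hxy ht)
      (by simp)
  exact (uniqueDiffOn_Icc zero_lt_one 0 ⟨le_rfl, zero_le_one⟩).eq_deriv _ hchain haffine

theorem Metric.norm_fderiv_infDist_eq_one [ProperSpace E] (hs : IsClosed s) (hne : s.Nonempty)
    (hx : x ∉ s) (hd : DifferentiableAt ℝ (infDist · s) x) :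
    ‖fderiv ℝ (infDist · s) x‖ = 1 := by
  obtain ⟨y, hy, hxy⟩ := hs.exists_infDist_eq_dist hne x
  have hpos : 0 < infDist x s := (hs.notMem_iff_infDist_pos hne).1 hx
  refine le_antisymm (by simpa using norm_fderiv_le_of_lipschitz ℝ (lipschitz_infDist_pt s)) ?_
  have hnorm : ‖y - x‖ = infDist x s := by rw [hxy, dist_comm, dist_eq_norm]
  have hop := (fderiv ℝ (infDist · s) x).le_opNorm (y - x)
  rw [fderiv_infDist_apply_sub_of_infDist_eq_dist hd hy hxy, norm_neg, hnorm,
    Real.norm_of_nonneg hpos.le] at hop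
  nlinarith

end InfDist

theorem norm_gradient_eq_norm_fderiv {E : Type*} [NormedAddCommGroup E] [InnerProductSpace ℝ E]
    [CompleteSpace E] (f : E → ℝ) (x : E) : ‖gradient f x‖ = ‖fderiv ℝ f x‖ := by
  rw [← toDual_gradient, LinearIsometryEquiv.norm_map]

theorem signedDist_gradient_norm_one_general
    {n : ℕ} (A : Set (EuclideanSpace ℝ (Fin n)))
    (hΓ : (frontier A).Nonempty)
    (u : EuclideanSpace ℝ (Fin n) → ℝ)
    (hu_in : ∀ x ∈ A, u x = -Metric.infDist x (frontier A))
    (hu_out : ∀ x ∉ A, u x = Metric.infDist x (frontier A))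
    (x : EuclideanSpace ℝ (Fin n)) (hx : x ∉ frontier A)
    (hd : DifferentiableAt ℝ u x) :
    ‖gradient u x‖ = 1 := by
  rw [norm_gradient_eq_norm_fderiv]
  rcases not_and_or.1 hx with hext | hint
  · have hu : u =ᶠ[𝓝 x] (infDist · (frontier A)) := by
      filter_upwards [isClosed_closure.isOpen_compl.mem_nhds hext] with z hz
      exact hu_out z fun hzA => hz (subset_closure hzA)
    rw [hu.fderiv_eq]
    exact norm_fderiv_infDist_eq_one isClosed_frontier hΓ hx (hd.congr_of_eventuallyEq hu.symm)
  · have hu : u =ᶠ[𝓝 x] fun z => -infDist z (frontier A) := by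
      filter_upwards [mem_interior_iff_mem_nhds.1 (not_not.1 hint)] with z hz
      exact hu_in z hz
    rw [hu.fderiv_eq, fderiv_fun_neg, norm_neg]
    exact norm_fderiv_infDist_eq_one isClosed_frontier hΓ hx
      (differentiableAt_fun_neg_iff.1 (hd.congr_of_eventuallyEq hu.symm))

/-- Eikonal equation: at every point of differentiability off the interface, the gradient of
the signed distance function has norm one. -/
theorem signedDist_gradient_norm_one
    {n : ℕ} (A : Set (EuclideanSpace ℝ (Fin n))) (hA : IsOpen A)
    (hbdd : Bornology.IsBounded A) (hΓ : (frontier A).Nonempty)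
    (u : EuclideanSpace ℝ (Fin n) → ℝ)
    (hu_in : ∀ x ∈ A, u x = -Metric.infDist x (frontier A))
    (hu_out : ∀ x ∉ A, u x = Metric.infDist x (frontier A))
    (x : EuclideanSpace ℝ (Fin n)) (hx : x ∉ frontier A)
    (hd : DifferentiableAt ℝ u x) :
    ‖gradient u x‖ = 1 :=
  signedDist_gradient_norm_one_general A hΓ u hu_in hu_out x hx hd
end

section
/- Let A ⊆ EuclideanSpace ℝ (Fin n) be an open bounded set whose frontier Γ = frontier A is nonempty, define the signed distance function u by u(x) = infDist(x, Γ) if x ∉ A and u(x) = −infDist(x, Γ) if x ∈ A, and let φ : EuclideanSpace ℝ (Fin n) → ℝ be a function whose zero level set is Γ, i.e., Γ = {x : φ(x) = 0}. Fix η with 0 < η < 1. Then for almost every x ∈ EuclideanSpace ℝ (Fin n) (with respect to Lebesgue measure) the following hold simultaneously: (i) u is differentiable at x with gradient ∇u(x); (ii) φ(x − u(x) • ∇u(x)) = 0; and (iii) u is differentiable at the point x − η • u(x) • ∇u(x) with gradient equal to ∇u(x). Consequently, all three integrands of the loss functional L(u, V) = ∫‖∇u − V‖² + ∫|φ(x −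 u V)|² + ∫‖V(x) − V(x − η u V)‖², evaluated at V = ∇u, vanish almost everywhere, so the signed distance function is a minimizer of L. -/
/-!
The signed distance `u` is `1`-Lipschitz, because a segment from a point of `A` to a point
outside `A` crosses `Γ`; by Rademacher's theorem it is differentiable almost everywhere. Take
such an `x` off `Γ`, say with `u x > 0` (otherwise replace `u` by `-u`), and a nearest point
`y ∈ Γ`. Then `u ≤ dist · y` with equality at `x`, so `x` maximizes `u - dist · y` and
`∇u x = (x - y) / ‖x - y‖`; hence `x - u x • ∇u x = y`. At `z = x + η • (y - x)` the function
`u` is squeezed between `dist · y` and the translate `p ↦ u (p - (z - x)) - ‖z - x‖`: the two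
bounds agree at `z` and both have gradient `∇u x` there, so `u` does too.
-/

open MeasureTheory Metric Set Filter Asymptotics InnerProductSpace
open scoped Topology Gradient

theorem IsPreconnected.inter_frontier_nonempty {X : Type*} [TopologicalSpace X] {S A : Set X}
    (hS : IsPreconnected S) (hSA : (S ∩ A).Nonempty) (hSA' : (S \ A).Nonempty) :
    (S ∩ frontier A).Nonempty := by
  by_contra! h
  have hsub : S ⊆ interior A ∪ (closure A)ᶜ := fun p hp => by
    by_contra! hp'
    simp only [mem_union, mem_compl_iff, not_or, not_not] at hp'
    exact h.subset ⟨hp, hp'.2, hp'.1⟩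
  obtain ⟨a, haS, haA⟩ := hSA
  obtain ⟨b, hbS, hbA⟩ := hSA'
  have ha : a ∈ interior A := (hsub haS).resolve_right (not_not.2 (subset_closure haA))
  have hb : b ∈ (closure A)ᶜ := (hsub hbS).resolve_left fun hb => hbA (interior_subset hb)
  obtain ⟨p, -, hpi, hpc⟩ := hS _ _ isOpen_interior isClosed_closure.isOpen_compl hsub
    ⟨a, haS, ha⟩ ⟨b, hbS, hb⟩
  exact hpc (interior_subset_closure hpi)

section
variable {E : Type*} [NormedAddCommGroup E] [NormedSpace ℝ E]

theorem HasFDerivAt.of_le_of_le {L g U : E → ℝ} {f : StrongDual ℝ E} {a : E}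
    (hL : HasFDerivAt L f a) (hU : HasFDerivAt U f a) (hLg : ∀ᶠ p in 𝓝 a, L p ≤ g p)
    (hgU : ∀ᶠ p in 𝓝 a, g p ≤ U p) (hLU : L a = U a) : HasFDerivAt g f a := by
  have hga : g a = L a := le_antisymm (hLU ▸ hgU.self_of_nhds) hLg.self_of_nhds
  have hgap : (fun p => g p - L p) =o[𝓝 a] fun p => p - a := by
    refine IsBigO.trans_isLittleO (g := fun p => U p - L p) ?_ ?_
    · refine IsBigO.of_bound' ?_
      filter_upwards [hLg, hgU] with p h1 h2
      rw [Real.norm_of_nonneg (by linarith), Real.norm_of_nonneg (by linarith)]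
      linarith
    · simpa [hLU] using (hU.sub hL).isLittleO
  rw [hasFDerivAt_iff_isLittleO] at hL ⊢
  convert hL.add hgap using 2 with p
  rw [hga]; ring

theorem infDist_add_infDist_frontier_le_dist {A : Set E} {p q : E} (hp : p ∈ A) (hq : q ∉ A) :
    infDist p (frontier A) + infDist q (frontier A) ≤ dist p q := by
  obtain ⟨z, hzpq, hzA⟩ := (convex_segment p q).isPreconnected.inter_frontier_nonempty
    ⟨p, left_mem_segment ℝ p q, hp⟩ ⟨q, right_mem_segment ℝ p q, hq⟩
  calc infDist p (frontier A) + infDist q (frontier A) ≤ dist p z + dist z q := by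
        rw [dist_comm z q]
        exact add_le_add (infDist_le_dist_of_mem hzA) (infDist_le_dist_of_mem hzA)
    _ = dist p q := dist_add_dist_of_mem_segment hzpq

theorem lipschitzWith_one_of_signedDist {A : Set E} {u : E → ℝ}
    (hu_in : ∀ x ∈ A, u x = -infDist x (frontier A))
    (hu_out : ∀ x ∉ A, u x = infDist x (frontier A)) : LipschitzWith 1 u := by
  refine LipschitzWith.of_dist_le_mul fun p q => ?_
  have hdist := (lipschitz_infDist_pt (frontier A)).dist_le_mul p q
  rw [NNReal.coe_one, one_mul] at hdist ⊢
  have hp0 : 0 ≤ infDist p (frontier A) := infDist_nonneg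
  have hq0 : 0 ≤ infDist q (frontier A) := infDist_nonneg
  by_cases hp : p ∈ A <;> by_cases hq : q ∈ A
  · rwa [hu_in p hp, hu_in q hq, dist_neg_neg]
  · have h := infDist_add_infDist_frontier_le_dist hp hq
    rw [hu_in p hp, hu_out q hq, Real.dist_eq, abs_of_nonpos (by linarith)]
    linarith
  · have h := infDist_add_infDist_frontier_le_dist hq hp
    rw [hu_out p hp, hu_in q hq, Real.dist_eq, abs_of_nonneg (by linarith), dist_comm]
    linarith
  · rwa [hu_out p hp, hu_out q hq]

end

section
variable {E : Type*} [NormedAddCommGroup E] [InnerProductSpace ℝ E] [CompleteSpace E]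

theorem hasGradientAt_norm {a : E} (ha : a ≠ 0) : HasGradientAt (‖·‖) (‖a‖⁻¹ • a) a := by
  have h := (hasStrictFDerivAt_norm_sq a).hasFDerivAt.sqrt (by simpa using ha)
  simp only [Real.sqrt_sq (norm_nonneg _)] at h
  rw [hasGradientAt_iff_hasFDerivAt]
  refine h.congr_fderiv (ContinuousLinearMap.ext fun v => ?_)
  simp only [one_div, mul_inv_rev, smul_apply, coe_innerSL_apply, nsmul_eq_mul, Nat.cast_ofNat,
    smul_eq_mul, map_smul, toDual_apply_apply]
  field_simp

variable {u : E → ℝ} {x y : E}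

theorem hasGradientAt_dist_const (hxy : x ≠ y) :
    HasGradientAt (dist · y) (‖x - y‖⁻¹ • (x - y)) x := by
  have h := (hasGradientAt_norm (sub_ne_zero.2 hxy)).hasFDerivAt.comp x
    ((hasFDerivAt_id x).sub_const y)
  rw [hasGradientAt_iff_hasFDerivAt]
  simpa only [dist_eq_norm, Function.comp_def, id, ContinuousLinearMap.comp_id] using h

theorem gradient_eq_of_le_dist (hle : ∀ p, u p ≤ dist p y) (hx : u x = dist x y) (hxy : x ≠ y)
    (hd : DifferentiableAt ℝ u x) : ∇ u x = ‖x - y‖⁻¹ • (x - y) := by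
  have hmax : IsLocalMax (fun p => u p - dist p y) x :=
    Eventually.of_forall fun p => by simp only [hx, sub_self, sub_nonpos, hle p]
  have h0 := hmax.hasFDerivAt_eq_zero (hd.hasFDerivAt.sub (hasGradientAt_dist_const hxy))
  rw [sub_eq_zero] at h0
  simp only [gradient, h0, LinearIsometryEquiv.symm_apply_apply]

theorem hasGradientAt_lineMap_of_le_dist (hlip : LipschitzWith 1 u) (hle : ∀ p, u p ≤ dist p y)
    (hx : u x = dist x y) (hxy : x ≠ y) (hd : DifferentiableAt ℝ u x) {t : ℝ} (ht0 : 0 ≤ t)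
    (ht1 : t < 1) : HasGradientAt u (∇ u x) (x + t • (y - x)) := by
  set v := t • (y - x)
  have hzy : x + v - y = (1 - t) • (x - y) := by module
  have hv : ‖v‖ = t * ‖x - y‖ := by
    rw [norm_smul, Real.norm_of_nonneg ht0, norm_sub_rev]
  have hU : HasGradientAt (dist · y) (∇ u x) (x + v) := by
    have h := hasGradientAt_dist_const (x := x + v) (y := y) (by
      rw [← sub_ne_zero, hzy]
      exact smul_ne_zero (by linarith) (sub_ne_zero.2 hxy))
    rwa [hzy, norm_smul, Real.norm_of_nonneg (by linarith), mul_inv, mul_smul,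
      smul_comm ‖x - y‖⁻¹ (1 - t), inv_smul_smul₀ (by linarith),
      ← gradient_eq_of_le_dist hle hx hxy hd] at h
  have hL : HasFDerivAt (fun p => u (p - v) - ‖v‖) (toDual ℝ E (∇ u x)) (x + v) := by
    have hx' : HasFDerivAt u (toDual ℝ E (∇ u x)) (x + v - v) := by
      rw [add_sub_cancel_right]; exact hd.hasGradientAt
    simpa using (hx'.comp (x + v) ((hasFDerivAt_id _).sub_const v)).sub_const ‖v‖
  refine hL.of_le_of_le hU.hasFDerivAt (Eventually.of_forall fun p => ?_)
    (Eventually.of_forall hle) ?_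
  · have h := hlip.dist_le_mul (p - v) p
    rw [NNReal.coe_one, one_mul, dist_self_sub_left, Real.dist_eq, abs_le] at h
    linarith [h.2]
  · rw [add_sub_cancel_right, hx, hv, dist_eq_norm, dist_eq_norm, hzy, norm_smul,
      Real.norm_of_nonneg (by linarith)]
    ring

theorem sub_smul_gradient_eq_of_le_dist (hle : ∀ p, u p ≤ dist p y) (hx : u x = dist x y)
    (hxy : x ≠ y) (hd : DifferentiableAt ℝ u x) (t : ℝ) :
    x - (t * u x) • ∇ u x = x + t • (y - x) := by
  rw [gradient_eq_of_le_dist hle hx hxy hd, hx, smul_smul, ← dist_eq_norm, mul_assoc,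
    mul_inv_cancel₀ (dist_ne_zero.2 hxy), mul_one]
  module

theorem sub_smul_gradient_mem_and_hasGradientAt_of_pos [ProperSpace E] {s : Set E}
    (hs : IsClosed s) (hlip : LipschitzWith 1 u) (hle : ∀ p, u p ≤ infDist p s)
    (hx : u x = infDist x s) (hpos : 0 < u x) (hd : DifferentiableAt ℝ u x) {t : ℝ}
    (ht0 : 0 ≤ t) (ht1 : t < 1) :
    x - u x • ∇ u x ∈ s ∧ HasGradientAt u (∇ u x) (x - (t * u x) • ∇ u x) := by
  have hne : s.Nonempty := nonempty_iff_ne_empty.2 fun h => by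
    rw [h, infDist_empty] at hx; exact hpos.ne' hx
  obtain ⟨y, hys, hyx⟩ := hs.exists_infDist_eq_dist hne x
  have hle' : ∀ p, u p ≤ dist p y := fun p => (hle p).trans (infDist_le_dist_of_mem hys)
  rw [hyx] at hx
  have hxy : x ≠ y := dist_pos.1 (hx ▸ hpos)
  constructor
  · have hproj := sub_smul_gradient_eq_of_le_dist hle' hx hxy hd 1
    rw [one_mul, one_smul, add_sub_cancel] at hproj
    rwa [hproj]
  · rw [sub_smul_gradient_eq_of_le_dist hle' hx hxy hd]
    exact hasGradientAt_lineMap_of_le_dist hlip hle' hx hxy hd ht0 ht1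

theorem sub_smul_gradient_mem_and_hasGradientAt [ProperSpace E] {s : Set E} (hs : IsClosed s)
    (hne : s.Nonempty) (hlip : LipschitzWith 1 u) (habs : ∀ p, |u p| = infDist p s)
    (hd : DifferentiableAt ℝ u x) {t : ℝ} (ht0 : 0 ≤ t) (ht1 : t < 1) :
    x - u x • ∇ u x ∈ s ∧ HasGradientAt u (∇ u x) (x - (t * u x) • ∇ u x) := by
  rcases lt_trichotomy (u x) 0 with hneg | hzero | hpos
  · have hgrad : ∇ (-u) x = -∇ u x := by simp [gradient, fderiv_neg]
    have h := sub_smul_gradient_mem_and_hasGradientAt_of_pos hs hlip.neg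
      (fun p => (neg_le_abs (u p)).trans (habs p).le) (by simp [← habs x, abs_of_neg hneg])
      (neg_pos.2 hneg) hd.neg ht0 ht1
    simp only [Pi.neg_apply, hgrad, mul_neg, neg_smul_neg] at h
    refine ⟨h.1, ?_⟩
    rw [hasGradientAt_iff_hasFDerivAt]
    simpa using (hasGradientAt_iff_hasFDerivAt.1 h.2).neg
  · have hxs : x ∈ s := (hs.mem_iff_infDist_zero hne).2 (by rw [← habs, hzero, abs_zero])
    simpa [hzero] using ⟨hxs, hd.hasGradientAt⟩
  · exact sub_smul_gradient_mem_and_hasGradientAt_of_pos hs hlip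
      (fun p => (le_abs_self (u p)).trans (habs p).le) (by rw [← habs, abs_of_pos hpos]) hpos hd
      ht0 ht1

end

theorem signedDist_minimizes_loss_ae_general
    {n : ℕ} (A : Set (EuclideanSpace ℝ (Fin n)))
    (hΓ : (frontier A).Nonempty)
    (u : EuclideanSpace ℝ (Fin n) → ℝ)
    (hu_in : ∀ x ∈ A, u x = -Metric.infDist x (frontier A))
    (hu_out : ∀ x ∉ A, u x = Metric.infDist x (frontier A))
    (φ : EuclideanSpace ℝ (Fin n) → ℝ)
    (hφ : frontier A = {x | φ x = 0})
    (η : ℝ) (hη0 : 0 < η) (hη1 : η < 1) :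
    ∀ᵐ x ∂(volume : Measure (EuclideanSpace ℝ (Fin n))),
      DifferentiableAt ℝ u x ∧
        φ (x - u x • gradient u x) = 0 ∧
        DifferentiableAt ℝ u (x - (η * u x) • gradient u x) ∧
        gradient u (x - (η * u x) • gradient u x) = gradient u x := by
  have hlip := lipschitzWith_one_of_signedDist hu_in hu_out
  have habs : ∀ p, |u p| = infDist p (frontier A) := fun p => by
    by_cases hp : p ∈ A
    · rw [hu_in p hp, abs_neg, abs_of_nonneg infDist_nonneg]
    · rw [hu_out p hp, abs_of_nonneg infDist_nonneg]
  filter_upwards [hlip.ae_differentiableAt] with x hx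
  obtain ⟨hmem, hgrad⟩ := sub_smul_gradient_mem_and_hasGradientAt isClosed_frontier hΓ hlip habs
    hx hη0.le hη1
  rw [hφ] at hmem
  exact ⟨hx, hmem, hgrad.differentiableAt, hgrad.gradient⟩

/-- For almost every `x`, the signed distance function `u` is differentiable at `x`, the
shortest-path point `x - u x • ∇u x` lies on the zero level set of `φ`, and `u` is
differentiable at `x - η • u x • ∇u x` with the same gradient. Hence all three integrands
of the loss functional of the paper vanish a.e. at `V = ∇u`, so the signed distance
function minimizes the loss. -/
theorem signedDist_minimizes_loss_ae
    {n : ℕ} (A : Set (EuclideanSpace ℝ (Fin n))) (hA : IsOpen A)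
    (hbdd : Bornology.IsBounded A) (hΓ : (frontier A).Nonempty)
    (u : EuclideanSpace ℝ (Fin n) → ℝ)
    (hu_in : ∀ x ∈ A, u x = -Metric.infDist x (frontier A))
    (hu_out : ∀ x ∉ A, u x = Metric.infDist x (frontier A))
    (φ : EuclideanSpace ℝ (Fin n) → ℝ)
    (hφ : frontier A = {x | φ x = 0})
    (η : ℝ) (hη0 : 0 < η) (hη1 : η < 1) :
    ∀ᵐ x ∂(volume : Measure (EuclideanSpace ℝ (Fin n))),
      DifferentiableAt ℝ u x ∧
        φ (x - u x • gradient u x) = 0 ∧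
        DifferentiableAt ℝ u (x - (η * u x) • gradient u x) ∧
        gradient u (x - (η * u x) • gradient u x) = gradient u x :=
  signedDist_minimizes_loss_ae_general A hΓ u hu_in hu_out φ hφ η hη0 hη1
end
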